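/- If a finite-dimensional complex Lie algebra g of dimension 2n+1 admits a contact form, then ind g = 1. -/

import Mathlib

open scoped TensorProduct

noncomputable section

namespace ContactSeaweeds

/-! ### Index of a Lie algebra -/

/-- The kernel of the Kirillov form `B_φ(x, y) = φ ⁅x, y⁆` associated to a one-form `φ`. -/
def kirillovKernel {L : Type*} [LieRing L] [LieAlgebra ℂ L] (φ : Module.Dual ℂ L) :
    Submodule ℂ L where
  carrier := {x | ∀ y, φ ⁅x, y⁆ = 0}
  add_mem' := by
    intro x y hx hy z
    simp [add_lie, hx z, hy z]
  zero_mem' := by intro y; simp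
  smul_mem' := by
    intro c x hx y
    simp [smul_lie, hx y]

/-- The index of a complex Lie algebra:
`ind L = min_{φ ∈ L*} dim {x ∈ L | φ ⁅x, y⁆ = 0 for all y ∈ L}`. -/
def lieIndex (L : Type*) [LieRing L] [LieAlgebra ℂ L] : ℕ :=
  sInf {d : ℕ | ∃ φ : Module.Dual ℂ L, d = Module.finrank ℂ (kirillovKernel φ)}

/-! ### Contact structures -/

/-- Wedge product of complex-valued alternating forms. -/
def wedge {L : Type*} [AddCommGroup L] [Module ℂ L] {p q : ℕ}
    (α : L [⋀^Fin p]→ₗ[ℂ] ℂ) (β : L [⋀^Fin q]→ₗ[ℂ] ℂ) : L [⋀^Fin (p + q)]→ₗ[ℂ] ℂ :=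
  ((TensorProduct.lid ℂ ℂ).toLinearMap.compAlternatingMap (α.domCoprod β)).domDomCongr
    finSumFinEquiv

/-- `k`-th wedge power of a two-form. -/
def wedgePow {L : Type*} [AddCommGroup L] [Module ℂ L] (β : L [⋀^Fin 2]→ₗ[ℂ] ℂ) :
    (k : ℕ) → L [⋀^Fin (2 * k)]→ₗ[ℂ] ℂ
  | 0 => (AlternatingMap.constOfIsEmpty ℂ L (Fin 0) 1).domDomCongr (finCongr (by ring))
  | k + 1 => (wedge β (wedgePow β k)).domDomCongr (finCongr (by ring))

/-- The alternating two-form `dφ (x, y) = -φ ⁅x, y⁆`. -/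
def dForm {L : Type*} [LieRing L] [LieAlgebra ℂ L] (φ : Module.Dual ℂ L) :
    L [⋀^Fin 2]→ₗ[ℂ] ℂ where
  toFun v := -φ ⁅v 0, v 1⁆
  map_update_add' := by
    intro _ v i x y
    fin_cases i <;>
      simp [Function.update_apply, Fin.ext_iff, add_lie, lie_add] <;> ring
  map_update_smul' := by
    intro _ v i c x
    fin_cases i <;>
      simp [Function.update_apply, Fin.ext_iff, smul_lie, lie_smul]
  map_eq_zero_of_eq' := by
    intro v i j hv hij
    have : i = 0 ∧ j = 1 ∨ i = 1 ∧ j = 0 := by omega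
    rcases this with ⟨hi, hj⟩ | ⟨hi, hj⟩ <;> subst hi <;> subst hj <;>
      · show -φ ⁅v 0, v 1⁆ = 0
        rw [hv]
        simp

/-- The `(1 + 2n)`-form `φ ∧ (dφ)^n`. -/
def contactCandidate {L : Type*} [LieRing L] [LieAlgebra ℂ L] (n : ℕ)
    (φ : Module.Dual ℂ L) : L [⋀^Fin (1 + 2 * n)]→ₗ[ℂ] ℂ :=
  wedge (AlternatingMap.ofSubsingleton ℂ L ℂ (0 : Fin 1) φ) (wedgePow (dForm φ) n)

/-- `φ` is a contact form: `φ ∧ (dφ)^n ≠ 0` (for a Lie algebra of dimension `2n + 1`). -/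
def IsContactForm {L : Type*} [LieRing L] [LieAlgebra ℂ L] (n : ℕ)
    (φ : Module.Dual ℂ L) : Prop :=
  contactCandidate n φ ≠ 0

/-- A complex Lie algebra is contact if it has (odd) dimension `2n + 1` and admits a one-form
`φ` with `φ ∧ (dφ)^n ≠ 0`. -/
def IsContact (L : Type*) [LieRing L] [LieAlgebra ℂ L] : Prop :=
  ∃ n : ℕ, Module.finrank ℂ L = 2 * n + 1 ∧ ∃ φ : Module.Dual ℂ L, IsContactForm n φ

/-! ### Seaweed algebras -/

/-- `c` is a composition of `n`: a list of positive integers summing to `n`. -/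
def IsComposition (n : ℕ) (c : List ℕ) : Prop :=
  (∀ x ∈ c, 0 < x) ∧ c.sum = n

/-- `i` and `j` (0-based) lie in the same block of the composition `c`. -/
def SameBlock (c : List ℕ) (i j : ℕ) : Prop :=
  ∃ k : ℕ, (c.take k).sum ≤ i ∧ i < (c.take (k + 1)).sum ∧
    (c.take k).sum ≤ j ∧ j < (c.take (k + 1)).sum

/-- The `(i, j)` location (0-based) is admissible for the seaweed determined by the
compositions `a` (lower-triangular blocks) and `b` (upper-triangular blocks). -/
def Admissible (a b : List ℕ) (i j : ℕ) : Prop :=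
  (j ≤ i ∧ SameBlock a i j) ∨ (i ≤ j ∧ SameBlock b i j)

lemma take_sum_mono (c : List ℕ) {m m' : ℕ} (h : m ≤ m') :
    (c.take m).sum ≤ (c.take m').sum := by
  obtain ⟨d, rfl⟩ := Nat.exists_eq_add_of_le h
  rw [List.take_add, List.sum_append]
  omega

lemma sameBlock_symm {c : List ℕ} {i j : ℕ} (h : SameBlock c i j) : SameBlock c j i := by
  obtain ⟨k, h1, h2, h3, h4⟩ := h
  exact ⟨k, h3, h4, h1, h2⟩

lemma sameBlock_trans {c : List ℕ} {i j k : ℕ} (h1 : SameBlock c i k) (h2 : SameBlock c k j) :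
    SameBlock c i j := by
  obtain ⟨k1, a1, a2, a3, a4⟩ := h1
  obtain ⟨k2, b1, b2, b3, b4⟩ := h2
  have hk : k1 = k2 := by
    rcases Nat.lt_trichotomy k1 k2 with h | h | h
    · have := take_sum_mono c (show k1 + 1 ≤ k2 from h)
      omega
    · exact h
    · have := take_sum_mono c (show k2 + 1 ≤ k1 from h)
      omega
  subst hk
  exact ⟨k1, a1, a2, b3, b4⟩

lemma sameBlock_between {c : List ℕ} {i j z : ℕ} (h : SameBlock c i j)
    (h1 : i ≤ z ∨ j ≤ z) (h2 : z ≤ i ∨ z ≤ j) : SameBlock c i z := by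
  obtain ⟨k, a1, a2, a3, a4⟩ := h
  exact ⟨k, a1, a2, by omega, by omega⟩

lemma admissible_trans {a b : List ℕ} {i j k : ℕ} (h1 : Admissible a b i k)
    (h2 : Admissible a b k j) : Admissible a b i j := by
  rcases h1 with ⟨hik, hsb1⟩ | ⟨hik, hsb1⟩ <;> rcases h2 with ⟨hkj, hsb2⟩ | ⟨hkj, hsb2⟩
  · exact Or.inl ⟨le_trans hkj hik, sameBlock_trans hsb1 hsb2⟩
  · rcases le_or_gt j i with hji | hij
    · exact Or.inl ⟨hji, sameBlock_between hsb1 (by omega) (by omega)⟩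
    · exact Or.inr ⟨le_of_lt hij, sameBlock_trans
        (sameBlock_symm (sameBlock_between hsb2 (by omega) (by omega))) hsb2⟩
  · rcases le_or_gt j i with hji | hij
    · exact Or.inl ⟨hji, sameBlock_trans
        (sameBlock_symm (sameBlock_between hsb2 (by omega) (by omega))) hsb2⟩
    · exact Or.inr ⟨le_of_lt hij, sameBlock_between hsb1 (by omega) (by omega)⟩
  · exact Or.inr ⟨le_trans hik hkj, sameBlock_trans hsb1 hsb2⟩

attribute [local instance 100] LieRing.ofAssociativeRing

/-- The type-A seaweed `pₙᴬ(a₁|⋯|aₘ \ b₁|⋯|b_t)`: the Lie algebra of traceless `n × n`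
complex matrices supported on admissible locations. -/
def seaweed (n : ℕ) (a b : List ℕ) : LieSubalgebra ℂ (Matrix (Fin n) (Fin n) ℂ) where
  carrier := {M | Matrix.trace M = 0 ∧
    ∀ i j : Fin n, ¬ Admissible a b i.val j.val → M i j = 0}
  add_mem' := by
    rintro M N ⟨hM1, hM2⟩ ⟨hN1, hN2⟩
    refine ⟨by simp [Matrix.trace_add, hM1, hN1], fun i j h => ?_⟩
    simp [Matrix.add_apply, hM2 i j h, hN2 i j h]
  zero_mem' := by simp
  smul_mem' := by
    rintro c M ⟨hM1, hM2⟩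
    refine ⟨by simp [Matrix.trace_smul, hM1], fun i j h => ?_⟩
    simp [Matrix.smul_apply, hM2 i j h]
  lie_mem' := by
    rintro M N ⟨hM1, hM2⟩ ⟨hN1, hN2⟩
    rw [Ring.lie_def]
    constructor
    · rw [Matrix.trace_sub, Matrix.trace_mul_comm, sub_self]
    · intro i j h
      rw [Matrix.sub_apply, Matrix.mul_apply, Matrix.mul_apply]
      have hz : ∀ k : Fin n, M i k * N k j = 0 ∧ N i k * M k j = 0 := by
        intro k
        constructor
        · by_cases hik : Admissible a b i.val k.val
          · rw [hN2 k j (fun hkj => h (admissible_trans hik hkj)), mul_zero]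
          · rw [hM2 i k hik, zero_mul]
        · by_cases hik : Admissible a b i.val k.val
          · rw [hM2 k j (fun hkj => h (admissible_trans hik hkj)), mul_zero]
          · rw [hN2 i k hik, zero_mul]
      rw [Finset.sum_congr rfl (fun k _ => (hz k).1), Finset.sum_congr rfl (fun k _ => (hz k).2)]
      simp

/-! ### Meanders -/

/-- `{i, j}` (0-based, with `i < j`) is a top edge of the meander of the composition `a`. -/
def TopEdge (a : List ℕ) (i j : ℕ) : Prop :=
  ∃ k r : ℕ, 2 * r + 1 < a.getD k 0 ∧
    i = (a.take k).sum + r ∧ j = (a.take k).sum + (a.getD k 0 - 1 - r)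

/-- `{i, j}` (0-based, with `i < j`) is a bottom edge of the meander of the composition `b`. -/
def BottomEdge (b : List ℕ) (i j : ℕ) : Prop :=
  ∃ k r : ℕ, 2 * r + 1 < b.getD k 0 ∧
    i = (b.take k).sum + r ∧ j = (b.take k).sum + (b.getD k 0 - 1 - r)

/-- The meander of the seaweed with compositions `a` and `b`, as a graph on the `n` vertices:
two vertices are adjacent when they are joined by a top edge or a bottom edge. -/
def meander (n : ℕ) (a b : List ℕ) : SimpleGraph (Fin n) where
  Adj i j := i ≠ j ∧ (TopEdge a i.val j.val ∨ TopEdge a j.val i.val ∨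
    BottomEdge b i.val j.val ∨ BottomEdge b j.val i.val)
  symm := by
    constructor
    rintro i j ⟨h1, h2⟩
    exact ⟨h1.symm, by tauto⟩
  loopless := ⟨fun i h => h.1 rfl⟩

/-- The vertex `v` (0-based) lies on exactly one top edge of the meander. -/
def OneTop (a : List ℕ) (v : ℕ) : Prop :=
  ∃! w : ℕ, TopEdge a v w ∨ TopEdge a w v

/-- The vertex `v` (0-based) lies on exactly one bottom edge of the meander. -/
def OneBottom (b : List ℕ) (v : ℕ) : Prop :=
  ∃! w : ℕ, BottomEdge b v w ∨ BottomEdge b w v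

/-- A connected component of the meander is a cycle: each of its vertices lies on exactly one
top edge and exactly one bottom edge. -/
def IsCycleComp {n : ℕ} {a b : List ℕ} (c : (meander n a b).ConnectedComponent) : Prop :=
  ∀ v : Fin n, (meander n a b).connectedComponentMk v = c → OneTop a v.val ∧ OneBottom b v.val

/-- A connected component of the meander is a path (possibly a single vertex): it has a vertex
missing a top edge or a bottom edge. -/
def IsPathComp {n : ℕ} {a b : List ℕ} (c : (meander n a b).ConnectedComponent) : Prop :=
  ∃ v : Fin n, (meander n a b).connectedComponentMk v = c ∧
    ¬ (OneTop a v.val ∧ OneBottom b v.val)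

/-! ### Distinguished linear functionals on matrices -/

/-- The linear functional `M ↦ M i j` on matrices. -/
def entryForm {n : ℕ} (i j : Fin n) : Matrix (Fin n) (Fin n) ℂ →ₗ[ℂ] ℂ :=
  (Matrix.traceLinearMap (Fin n) ℂ ℂ).comp (LinearMap.mulLeft ℂ (Matrix.single j i 1))

open scoped Classical in
/-- The one-form `F̄` read off the meander: the sum, over top edges `{v_i, v_j}` with `i < j`,
of `M ↦ M j i`, plus the sum, over bottom edges `{v_i, v_j}` with `i < j`, of `M ↦ M i j`. -/
def meanderForm (n : ℕ) (a b : List ℕ) : Matrix (Fin n) (Fin n) ℂ →ₗ[ℂ] ℂ :=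
  ∑ i : Fin n, ∑ j : Fin n,
    ((if TopEdge a i.val j.val then entryForm j i else 0) +
      (if BottomEdge b i.val j.val then entryForm i j else 0))

open scoped Classical in
/-- The linear functional `M ↦ M₁₁ + ⋯ + M_{i,i}` (1-based indexing), i.e. the sum of the
first `i` diagonal entries. -/
def partialTraceForm (n i : ℕ) : Matrix (Fin n) (Fin n) ℂ →ₗ[ℂ] ℂ :=
  (Matrix.traceLinearMap (Fin n) ℂ ℂ).comp
    (LinearMap.mulLeft ℂ (Matrix.diagonal fun l : Fin n => if l.val < i then (1 : ℂ) else 0))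

/-- The generating set `{e_{i,1} : 2 ≤ i ≤ a} ∪ {e_{a,j} : 2 ≤ j ≤ a-1}` (1-based indexing) of
a Heisenberg subalgebra of `n × n` matrices. -/
def heisSet (n a : ℕ) : Set (Matrix (Fin n) (Fin n) ℂ) :=
  {M | ∃ i j : Fin n, M = Matrix.single i j 1 ∧
    ((j.val = 0 ∧ 1 ≤ i.val ∧ i.val ≤ a - 1) ∨
      (i.val = a - 1 ∧ 1 ≤ j.val ∧ j.val ≤ a - 2))}

end ContactSeaweeds

/-! If `x` lies both in the kernel of the Kirillov form `(y, z) ↦ φ ⁅y, z⁆` and in `ker φ`,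
then `x` lies in the radical of `φ` and of `dφ`, hence in that of the top-degree form
`φ ∧ (dφ)ⁿ`, which therefore vanishes unless `x = 0`. So a contact form is injective on its
Kirillov kernel, which has dimension at most one. Conversely, every Kirillov form is
alternating on an odd-dimensional space, so its kernel is never zero. -/

namespace AlternatingMap

section Semiring

variable {R M N ι : Type*} [Semiring R] [AddCommMonoid M] [Module R M] [AddCommMonoid N]
  [Module R N]

def InRadical (f : M [⋀^ι]→ₗ[R] N) (x : M) : Prop :=
  ∀ v : ι → M, ∀ i, v i = x → f v = 0

theorem InRadical.of_isEmpty [IsEmpty ι] (f : M [⋀^ι]→ₗ[R] N) (x : M) : f.InRadical x :=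
  fun _ i => isEmptyElim i

theorem InRadical.domDomCongr {ι' : Type*} {f : M [⋀^ι]→ₗ[R] N} {x : M} (hf : f.InRadical x)
    (e : ι ≃ ι') : (f.domDomCongr e).InRadical x := fun v i hi =>
  hf (v ∘ e) (e.symm i) (by simpa using hi)

theorem inRadical_ofSubsingleton [Subsingleton ι] (i : ι) {g : M →ₗ[R] N} {x : M}
    (hx : g x = 0) : (ofSubsingleton R M N i g).InRadical x := fun v j hj => by
  rw [ofSubsingleton_apply_apply, Subsingleton.elim i j, hj, hx]

theorem InRadical.compAlternatingMap {N' : Type*} [AddCommMonoid N'] [Module R N']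
    {f : M [⋀^ι]→ₗ[R] N} {x : M} (hf : f.InRadical x) (g : N →ₗ[R] N') :
    (g.compAlternatingMap f).InRadical x := fun v i hi => by
  rw [LinearMap.compAlternatingMap_apply, hf v i hi]
  exact g.map_zero

end Semiring

section DomCoprod

open TensorProduct

variable {R M N₁ N₂ ιa ιb : Type*} [CommSemiring R] [AddCommMonoid M] [Module R M]
  [AddCommGroup N₁] [Module R N₁] [AddCommGroup N₂] [Module R N₂]
  [Fintype ιa] [Fintype ιb] [DecidableEq ιa] [DecidableEq ιb]

theorem InRadical.domCoprod {a : M [⋀^ιa]→ₗ[R] N₁} {b : M [⋀^ιb]→ₗ[R] N₂} {x : M}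
    (ha : a.InRadical x) (hb : b.InRadical x) : (a.domCoprod b).InRadical x := by
  intro v i hi
  rw [domCoprod_apply, sum_apply]
  refine Finset.sum_eq_zero fun σ _ => ?_
  induction σ using Quotient.inductionOn' with
  | h σ =>
    rw [domCoprod.summand_mk'', _root_.smul_apply, MultilinearMap.domDomCongr_apply,
      MultilinearMap.domCoprod_apply]
    simp only [coe_multilinearMap]
    rcases h : σ.symm i with j | j
    · rw [ha _ j (by simp [← h, hi]), zero_tmul, smul_zero]
    · rw [hb _ j (by simp [← h, hi]), tmul_zero, smul_zero]

end DomCoprod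

section Field

variable {K V N ι : Type*} [Field K] [AddCommGroup V] [Module K V] [FiniteDimensional K V]
  [AddCommMonoid N] [Module K N] [Finite ι]

theorem InRadical.eq_zero {f : V [⋀^ι]→ₗ[K] N} {x : V} (hf : f.InRadical x) (hx : x ≠ 0)
    (hι : Module.finrank K V ≤ Nat.card ι) : f = 0 := by
  have hli : LinearIndepOn K id {x} := (linearIndepOn_singleton_iff K).mpr hx
  let e := Module.Basis.extend hli
  have hxe : x ∈ hli.extend (Set.subset_univ _) := hli.subset_extend _ rfl
  refine e.ext_alternating fun v hv => ?_
  have hcard : Nat.card (hli.extend (Set.subset_univ _)) ≤ Nat.card ι := by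
    rwa [← Module.finrank_eq_nat_card_basis e]
  obtain ⟨i, hi⟩ := (hv.bijective_of_nat_card_le hcard).2 ⟨x, hxe⟩
  exact hf _ i (by rw [hi, Module.Basis.extend_apply_self])

end Field

end AlternatingMap

theorem Matrix.det_eq_zero_of_transpose_eq_neg {R n : Type*} [CommRing R] [NoZeroDivisors R]
    [CharZero R] [Fintype n] [DecidableEq n] {A : Matrix n n R} (hA : A.transpose = -A)
    (hn : Odd (Fintype.card n)) : A.det = 0 := by
  refine CharZero.eq_neg_self_iff.mp ?_
  calc A.det = A.transpose.det := A.det_transpose.symm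
    _ = -A.det := by rw [hA, Matrix.det_neg, hn.neg_one_pow, neg_one_mul]

theorem LinearMap.BilinForm.IsAlt.ker_ne_bot {K V : Type*} [Field K] [CharZero K]
    [AddCommGroup V] [Module K V] [FiniteDimensional K V] {B : LinearMap.BilinForm K V}
    (hB : B.IsAlt) (hV : Odd (Module.finrank K V)) : LinearMap.ker B ≠ ⊥ := by
  let b := Module.finBasis K V
  have hskew : (BilinForm.toMatrix b B).transpose = -BilinForm.toMatrix b B := by
    ext i j
    rw [Matrix.transpose_apply, Matrix.neg_apply, BilinForm.toMatrix_apply,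
      BilinForm.toMatrix_apply, hB.neg_eq]
  rw [Ne, ← nondegenerate_iff_ker_eq_bot, nondegenerate_iff_det_ne_zero b, not_not]
  exact Matrix.det_eq_zero_of_transpose_eq_neg hskew (by simpa using hV)

namespace ContactSeaweeds

open AlternatingMap Module

section Wedge

variable {L : Type*} [AddCommGroup L] [Module ℂ L] {x : L}

theorem inRadical_wedge {p q : ℕ} {α : L [⋀^Fin p]→ₗ[ℂ] ℂ} {β : L [⋀^Fin q]→ₗ[ℂ] ℂ}
    (hα : α.InRadical x) (hβ : β.InRadical x) : (wedge α β).InRadical x :=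
  ((hα.domCoprod hβ).compAlternatingMap _).domDomCongr _

theorem inRadical_wedgePow {β : L [⋀^Fin 2]→ₗ[ℂ] ℂ} (hβ : β.InRadical x) :
    ∀ k, (wedgePow β k).InRadical x
  | 0 => (InRadical.of_isEmpty _ _).domDomCongr _
  | k + 1 => (inRadical_wedge hβ (inRadical_wedgePow hβ k)).domDomCongr _

end Wedge

section Kirillov

variable {L : Type*} [LieRing L] [LieAlgebra ℂ L]

def kirillovForm (φ : Dual ℂ L) : LinearMap.BilinForm ℂ L :=
  (LieAlgebra.ad ℂ L : L →ₗ[ℂ] End ℂ L).compr₂ φ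

@[simp]
theorem kirillovForm_apply (φ : Dual ℂ L) (x y : L) : kirillovForm φ x y = φ ⁅x, y⁆ := rfl

theorem kirillovForm_isAlt (φ : Dual ℂ L) : (kirillovForm φ).IsAlt := fun x => by simp

theorem kirillovKernel_eq_ker (φ : Dual ℂ L) :
    kirillovKernel φ = LinearMap.ker (kirillovForm φ) := by
  ext x
  simp [LinearMap.ext_iff, kirillovKernel]

theorem one_le_finrank_kirillovKernel [FiniteDimensional ℂ L] (hL : Odd (finrank ℂ L))
    (φ : Dual ℂ L) : 1 ≤ finrank ℂ (kirillovKernel φ) := by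
  rw [Nat.one_le_iff_ne_zero, Ne, Submodule.finrank_eq_zero, kirillovKernel_eq_ker]
  exact (kirillovForm_isAlt φ).ker_ne_bot hL

theorem inRadical_dForm {φ : Dual ℂ L} {x : L} (hx : x ∈ kirillovKernel φ) :
    (dForm φ).InRadical x := by
  intro v i hi
  show -φ ⁅v 0, v 1⁆ = 0
  fin_cases i
  · rw [show v 0 = x from hi, hx, neg_zero]
  · rw [show v 1 = x from hi, ← lie_skew, map_neg, neg_neg, hx]

theorem IsContactForm.disjoint_kirillovKernel_ker [FiniteDimensional ℂ L] {n : ℕ}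
    (hdim : finrank ℂ L = 2 * n + 1) {φ : Dual ℂ L} (hφ : IsContactForm n φ) :
    Disjoint (kirillovKernel φ) (LinearMap.ker φ) := by
  refine Submodule.disjoint_def.mpr fun x hxK hxφ => by_contra fun hx => hφ ?_
  refine InRadical.eq_zero ?_ hx (by simp [hdim, add_comm])
  exact inRadical_wedge (inRadical_ofSubsingleton _ hxφ)
    (inRadical_wedgePow (inRadical_dForm hxK) n)

theorem IsContactForm.finrank_kirillovKernel_le_one [FiniteDimensional ℂ L] {n : ℕ}
    (hdim : finrank ℂ L = 2 * n + 1) {φ : Dual ℂ L} (hφ : IsContactForm n φ) :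
    finrank ℂ (kirillovKernel φ) ≤ 1 := by
  have hinj : Function.Injective (φ ∘ₗ (kirillovKernel φ).subtype) := by
    refine (injective_iff_map_eq_zero _).mpr fun x hx => Subtype.ext ?_
    exact Submodule.disjoint_def.mp (hφ.disjoint_kirillovKernel_ker hdim) x x.2 hx
  exact (LinearMap.finrank_le_finrank_of_injective hinj).trans (finrank_self ℂ).le

end Kirillov

/-- A `(2n+1)`-dimensional complex Lie algebra admitting a contact form has
index one. -/
theorem index_one_of_contact (L : Type*) [LieRing L] [LieAlgebra ℂ L] [FiniteDimensional ℂ L]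
    (n : ℕ) (hdim : Module.finrank ℂ L = 2 * n + 1)
    (φ : Module.Dual ℂ L) (hφ : IsContactForm n φ) :
    lieIndex L = 1 := by
  have hodd : Odd (finrank ℂ L) := ⟨n, hdim⟩
  refine IsLeast.csInf_eq ⟨⟨φ, ?_⟩, ?_⟩
  · exact le_antisymm (one_le_finrank_kirillovKernel hodd φ)
      (hφ.finrank_kirillovKernel_le_one hdim)
  · rintro _ ⟨ψ, rfl⟩
    exact one_le_finrank_kirillovKernel hodd ψ

end ContactSeaweeds
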